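/- arXiv:1804.09077 — 7 statements merged into one kernel-verified Lean document; each statement's English description precedes it below -/
import Mathlib

section
/- For all non-negative integers m and k, the number of leaves in a finite rooted tree whose width (maximal number of non-leaf nodes at any fixed depth) is at most k, whose outdegree is at most k, and which has at most m split nodes (nodes with more than one child) on each root-to-leaf branch, is at most ((m+1)·k)^k. -/
/-- Finite rooted trees with finitely many ordered children. -/
inductive RTree : Type where
  | node : List RTree → RTree

/-- The number of leaves of a tree (a node with no children is a leaf). -/
def RTree.leaves : RTree → ℕ
  | .node cs => if cs.isEmpty then 1 else (cs.attach.map (fun t => t.1.leaves)).sum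
decreasing_by
  have := List.sizeOf_lt_of_mem t.2
  simp only [RTree.node.sizeOf_spec]
  omega

/-- Number of internal (non-leaf) nodes at a given depth (root has depth 0). -/
def RTree.internalAt : RTree → ℕ → ℕ
  | .node cs, 0 => if cs.isEmpty then 0 else 1
  | .node cs, d + 1 => (cs.attach.map (fun t => t.1.internalAt d)).sum
decreasing_by
  have := List.sizeOf_lt_of_mem t.2
  simp only [RTree.node.sizeOf_spec]
  omega

/-- Every node of the tree has at most `k` children. -/
inductive RTree.DegLe (k : ℕ) : RTree → Prop where
  | mk (cs : List RTree) : cs.length ≤ k → (∀ t ∈ cs, RTree.DegLe k t) →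
      RTree.DegLe k (.node cs)

/-- Every root-to-leaf branch contains at most `m` split nodes
(nodes with at least two children). -/
inductive RTree.SplitLe : ℕ → RTree → Prop where
  | nosplit (m : ℕ) (cs : List RTree) : cs.length ≤ 1 →
      (∀ t ∈ cs, RTree.SplitLe m t) → RTree.SplitLe m (.node cs)
  | split (m : ℕ) (cs : List RTree) : 2 ≤ cs.length →
      (∀ t ∈ cs, RTree.SplitLe m t) → RTree.SplitLe (m + 1) (.node cs)

/-! Induction on the tree, with the sharper bound `(1 + m k) ^ w` for width `w`. A node with
one child changes nothing. At a split node let `c₀` be a child of maximal height: every depth at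
which another child has an internal node is a depth at which `c₀` has one too, so the other (at
most `k`) children have width at most `w - 1`, and the leaf count is at most
`(1 + m k) ^ w + k (1 + m k) ^ (w - 1) ≤ (1 + (m + 1) k) ^ w`. -/

namespace RTree

@[elab_as_elim]
theorem ind {P : RTree → Prop} (node : ∀ cs, (∀ c ∈ cs, P c) → P (.node cs)) : ∀ t, P t
  | .node cs => node cs fun c _ => ind node c
decreasing_by
  have := List.sizeOf_lt_of_mem ‹c ∈ cs›
  simp only [RTree.node.sizeOf_spec]
  omega

def height : RTree → ℕ
  | .node cs => (cs.attach.map fun c => c.1.height + 1).foldr max 0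
decreasing_by
  have := List.sizeOf_lt_of_mem c.2
  simp only [RTree.node.sizeOf_spec]
  omega

theorem leaves_node (cs : List RTree) :
    (node cs).leaves = if cs = [] then 1 else (cs.map leaves).sum := by
  rw [leaves, List.attach_map_val]
  simp

theorem internalAt_node_zero (cs : List RTree) :
    (node cs).internalAt 0 = if cs = [] then 0 else 1 := by
  rw [internalAt]
  simp

theorem internalAt_node_succ (cs : List RTree) (d : ℕ) :
    (node cs).internalAt (d + 1) = (cs.map (internalAt · d)).sum := by
  rw [internalAt]
  simp

theorem lt_height_node_iff {cs : List RTree} {d : ℕ} :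
    d < (node cs).height ↔ ∃ c ∈ cs, d ≤ c.height := by
  rw [height]
  simp only [List.attach_map_val (f := fun c => height c + 1)]
  induction cs with
  | nil => simp
  | cons c cs ih => simp [ih]

theorem internalAt_pos_iff {t : RTree} {d : ℕ} : 0 < t.internalAt d ↔ d < t.height := by
  induction t using ind generalizing d with
  | node cs ih =>
    cases d with
    | zero => cases cs <;> simp [internalAt_node_zero, lt_height_node_iff]
    | succ d =>
      simp only [internalAt_node_succ, List.sum_pos_iff_exists_pos_nat, List.mem_map,
        lt_height_node_iff, Nat.succ_le_iff]
      exact ⟨fun ⟨_, ⟨c, hc, rfl⟩, hpos⟩ => ⟨c, hc, (ih c hc).1 hpos⟩,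
        fun ⟨c, hc, hd⟩ => ⟨_, ⟨c, hc, rfl⟩, (ih c hc).2 hd⟩⟩

theorem internalAt_le_of_height_le {s t : RTree} {d w : ℕ} (hst : s.height ≤ t.height)
    (h : s.internalAt d + t.internalAt d ≤ w + 1) : s.internalAt d ≤ w := by
  rcases (s.internalAt d).eq_zero_or_pos with hs | hs
  · omega
  · have : 0 < t.internalAt d := internalAt_pos_iff.2 ((internalAt_pos_iff.1 hs).trans_le hst)
    omega

theorem leaves_node_le_pow_succ {cs : List RTree} {m k w : ℕ} (hne : cs ≠ [])
    (hlen : cs.length ≤ k)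
    (ih : ∀ c ∈ cs, ∀ w, (∀ d, c.internalAt d ≤ w) → c.leaves ≤ (1 + m * k) ^ w)
    (hwidth : ∀ d, (node cs).internalAt d ≤ w + 1) :
    (node cs).leaves ≤ (1 + (m + 1) * k) ^ (w + 1) := by
  classical
  obtain ⟨c₀, hc₀⟩ : ∃ c₀, c₀ ∈ cs.argmax height :=
    Option.ne_none_iff_exists'.1 (mt List.argmax_eq_none.1 hne)
  have hc₀cs : c₀ ∈ cs := List.argmax_mem hc₀
  set rest := cs.erase c₀
  have hperm : cs.Perm (c₀ :: rest) := List.perm_cons_erase hc₀cs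
  have hsum : ∀ d, c₀.internalAt d + (rest.map (internalAt · d)).sum ≤ w + 1 := fun d => by
    simpa [internalAt_node_succ, (hperm.map _).sum_eq] using hwidth (d + 1)
  have hrest : ∀ c ∈ rest, c.leaves ≤ (1 + m * k) ^ w := fun c hc =>
    have hccs : c ∈ cs := List.mem_of_mem_erase hc
    ih c hccs w fun d =>
      internalAt_le_of_height_le (t := c₀) (List.le_of_mem_argmax hccs hc₀) <| by
        have := List.le_sum_of_mem (List.mem_map_of_mem (f := (internalAt · d)) hc)
        have := hsum d
        omega
  have hc₀le : c₀.leaves ≤ (1 + m * k) ^ (w + 1) :=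
    ih c₀ hc₀cs _ fun d => (Nat.le_add_right _ _).trans (hsum d)
  have hrestlen : rest.length ≤ k := by
    rw [List.length_erase_of_mem hc₀cs]
    omega
  calc (node cs).leaves = c₀.leaves + (rest.map leaves).sum := by
        rw [leaves_node, if_neg hne, (hperm.map _).sum_eq, List.map_cons, List.sum_cons]
    _ ≤ (1 + m * k) ^ (w + 1) + rest.length * (1 + m * k) ^ w := by
        gcongr
        simpa using List.sum_le_card_nsmul _ _ (List.forall_mem_map.2 hrest)
    _ ≤ (1 + m * k) ^ (w + 1) + k * (1 + m * k) ^ w := by gcongr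
    _ = (1 + (m + 1) * k) * (1 + m * k) ^ w := by ring
    _ ≤ (1 + (m + 1) * k) ^ (w + 1) := by
        rw [pow_succ']
        gcongr
        nlinarith

theorem leaves_le_pow {k m w : ℕ} {t : RTree} (hdeg : t.DegLe k) (hsplit : t.SplitLe m)
    (hwidth : ∀ d, t.internalAt d ≤ w) : t.leaves ≤ (1 + m * k) ^ w := by
  induction hdeg generalizing m w with
  | mk cs hlen _ ih =>
    cases hsplit with
    | nosplit _ _ hle hall =>
      match cs, hle with
      | [], _ => simp [leaves_node, Nat.one_le_pow]
      | [c], _ =>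
        simpa [leaves_node] using
          ih c (List.mem_singleton_self c) (hall c (List.mem_singleton_self c))
            fun d => by simpa [internalAt_node_succ] using hwidth (d + 1)
    | split m _ h2 hall =>
      have hne : cs ≠ [] := List.ne_nil_of_length_pos (by omega)
      have hw : 1 ≤ w := by simpa [internalAt_node_zero, hne] using hwidth 0
      obtain ⟨w, rfl⟩ := Nat.exists_eq_add_of_le' hw
      exact leaves_node_le_pow_succ hne hlen
        (fun c hc w hw => ih c hc (hall c hc) hw) hwidth

end RTree

theorem stmt_0 (m k : ℕ) (t : RTree)
    (hwidth : ∀ d : ℕ, t.internalAt d ≤ k)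
    (hdeg : t.DegLe k)
    (hsplit : t.SplitLe m) :
    t.leaves ≤ ((m + 1) * k) ^ k := by
  calc t.leaves ≤ (1 + m * k) ^ k := RTree.leaves_le_pow hdeg hsplit hwidth
    _ ≤ ((m + 1) * k) ^ k := by
      rcases k.eq_zero_or_pos with rfl | hk
      · simp
      · gcongr
        nlinarith
end

section
/- Let X ⊆ ℝⁿ be a non-empty open set and C ⊆ ℝⁿ a convex cone such that X + C ⊆ X. If no non-zero integer vector d ∈ ℤⁿ is orthogonal to every element of C, then X contains an integer point, i.e., X ∩ ℤⁿ ≠ ∅. -/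
/-!
Let `S = C + ℤⁿ`. For `c ∈ C`, simultaneous Dirichlet approximation gives `(a + 1) • c ≈ z ∈ ℤⁿ`,
so `-c ≈ a • c - z ∈ S`; hence the closure of the monoid `S` is a closed subgroup `H ⊇ C ∪ ℤⁿ`.
If `H` were proper, split off the largest subspace `V ⊆ H`: in a complement `W` of `V`, the
trace of `H` contains no line, so it is discrete and (as `H` spans) a lattice of `W`. A coordinate
of a lattice basis, composed with the projection onto `W`, is a nonzero functional `F` taking
integer values on `H`. Being integral on every ray of `C`, `F` vanishes on `C`, while its values
on the unit vectors form an integer vector `d`; then `d ⊥ C` forces `d = 0`, i.e. `F = 0`.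
So `S` is dense: for an interior point `x₀` of `X` some `c + z ∈ S` is close to `-x₀`, whence
`-(c + z) ∈ X` and `-z = -(c + z) + c ∈ X + C ⊆ X`.
-/

open Filter Topology
open scoped Pointwise

theorem abs_floor_div_mul_sub_le (t : ℝ) {r : ℝ} (hr : 0 < r) : |⌊t / r⌋ * r - t| ≤ r := by
  rw [abs_sub_comm, abs_of_nonneg (Int.sub_floor_div_mul_nonneg t hr)]
  exact (Int.sub_floor_div_mul_lt t hr).le

theorem eq_zero_of_forall_nonneg_mul_eq_intCast {a : ℝ}
    (h : ∀ t : ℝ, 0 ≤ t → ∃ z : ℤ, t * a = z) : a = 0 := by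
  by_contra ha
  obtain ⟨z, hz⟩ := h (|a|⁻¹ / 2) (by positivity)
  have hhalf : |(z : ℝ)| = 1 / 2 := by
    rw [← hz, abs_mul, abs_of_nonneg (by positivity)]
    field_simp
  rcases eq_or_ne z 0 with rfl | hz0
  · norm_num at hhalf
  · have : (1 : ℝ) ≤ |(z : ℝ)| := by exact_mod_cast Int.one_le_abs hz0
    linarith

theorem IsZLattice.exists_dual_ne_zero_intValued {E : Type*} [NormedAddCommGroup E]
    [NormedSpace ℝ E] [FiniteDimensional ℝ E] [Nontrivial E] (L : Submodule ℤ E)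
    [DiscreteTopology L] [IsZLattice ℝ L] :
    ∃ F : Module.Dual ℝ E, F ≠ 0 ∧ ∀ x ∈ L, ∃ z : ℤ, F x = z := by
  let b := (Module.Free.chooseBasis ℤ L).ofZLatticeBasis ℝ L
  obtain ⟨i⟩ := b.index_nonempty
  refine ⟨b.coord i, fun h => by simpa using LinearMap.congr_fun h (b i), fun x hx => ?_⟩
  exact ⟨_, (Module.Free.chooseBasis ℤ L).ofZLatticeBasis_repr_apply ℝ L ⟨x, hx⟩ i⟩

namespace AddSubgroup

section Algebraic

variable (R : Type*) {E : Type*} [AddCommGroup E]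

def largestSubmodule [Semiring R] [Module R E] (H : AddSubgroup E) : Submodule R E where
  carrier := {v | ∀ t : R, t • v ∈ H}
  add_mem' ha hb t := by rw [smul_add]; exact H.add_mem (ha t) (hb t)
  zero_mem' t := by rw [smul_zero]; exact H.zero_mem
  smul_mem' c v hv t := by rw [smul_smul]; exact hv (t * c)

variable {R}

theorem largestSubmodule_subset [Semiring R] [Module R E] (H : AddSubgroup E) :
    (H.largestSubmodule R : Set E) ⊆ H :=
  fun v hv => by simpa using hv 1

theorem largestSubmodule_comap_subtype_eq_bot [Ring R] [Module R E] {H : AddSubgroup E}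
    {W : Submodule R E} (hW : Disjoint (H.largestSubmodule R) W) :
    (H.comap W.subtype.toAddMonoidHom).largestSubmodule R = ⊥ :=
  eq_bot_iff.2 fun w hw => by
    simpa using Submodule.disjoint_def.1 hW w (fun t => hw t) w.2

end Algebraic

section Normed

variable {E : Type*} [NormedAddCommGroup E] [NormedSpace ℝ E]

-- `⌊t / ‖y a‖⌋ • y a ∈ H` tends to `t • e`.
theorem mem_largestSubmodule_of_tendsto {H : AddSubgroup E} (hH : IsClosed (H : Set E))
    {α : Type*} {l : Filter α} [l.NeBot] {y : α → E} {e : E} (hyH : ∀ a, y a ∈ H)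
    (hy0 : ∀ a, y a ≠ 0) (hy : Tendsto (fun a => ‖y a‖) l (𝓝 0))
    (he : Tendsto (fun a => ‖y a‖⁻¹ • y a) l (𝓝 e)) : e ∈ H.largestSubmodule ℝ := by
  intro t
  set m : α → ℤ := fun a => ⌊t / ‖y a‖⌋
  have hm : Tendsto (fun a => (m a : ℝ) * ‖y a‖) l (𝓝 t) := by
    refine tendsto_iff_norm_sub_tendsto_zero.2 (squeeze_zero (fun _ => norm_nonneg _) ?_ hy)
    exact fun a => abs_floor_div_mul_sub_le t (norm_pos_iff.2 (hy0 a))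
  refine hH.mem_of_tendsto (hm.smul he) (Eventually.of_forall fun a => ?_)
  rw [smul_smul, mul_assoc, mul_inv_cancel₀ (norm_ne_zero_iff.2 (hy0 a)), mul_one,
    Int.cast_smul_eq_zsmul]
  exact H.zsmul_mem (hyH a) (m a)

theorem discreteTopology_of_largestSubmodule_eq_bot [FiniteDimensional ℝ E] {H : AddSubgroup E}
    (hH : IsClosed (H : Set E)) (hbot : H.largestSubmodule ℝ = ⊥) : DiscreteTopology H := by
  refine discreteTopology_of_isOpen_singleton_zero (Metric.isOpen_singleton_iff.2 ?_)
  by_contra! hacc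
  choose y hy hy0 using fun k : ℕ => hacc (1 / (k + 1)) Nat.one_div_pos_of_nat
  have hyE0 : ∀ k, (y k : E) ≠ 0 := fun k => by exact_mod_cast hy0 k
  have hsphere : ∀ k, ‖(y k : E)‖⁻¹ • (y k : E) ∈ Metric.sphere (0 : E) 1 := fun k => by
    simp [norm_smul, hyE0 k]
  obtain ⟨e, he, φ, hφ, hlim⟩ := (isCompact_sphere (0 : E) 1).tendsto_subseq hsphere
  have hynorm : Tendsto (fun k => ‖(y (φ k) : E)‖) atTop (𝓝 0) := by
    have hy' : ∀ k, ‖(y k : E)‖ ≤ 1 / (k + 1) := fun k => by simpa using (hy k).le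
    refine squeeze_zero (fun _ => norm_nonneg _) (fun k => hy' (φ k)) ?_
    exact tendsto_one_div_add_atTop_nhds_zero_nat.comp hφ.tendsto_atTop
  have heH := mem_largestSubmodule_of_tendsto hH (fun k => (y (φ k)).2) (fun k => hyE0 (φ k))
    hynorm hlim
  rw [hbot, Submodule.mem_bot] at heH
  simp [heH] at he

theorem exists_dual_ne_zero_intValued_of_isClosed [FiniteDimensional ℝ E] {H : AddSubgroup E}
    (hH : IsClosed (H : Set E)) (hspan : Submodule.span ℝ (H : Set E) = ⊤) (hne : H ≠ ⊤) :
    ∃ F : Module.Dual ℝ E, F ≠ 0 ∧ ∀ x ∈ H, ∃ z : ℤ, F x = z := by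
  set V := H.largestSubmodule ℝ
  obtain ⟨W, hVW⟩ := V.exists_isCompl
  set P := W.projectionOnto V hVW.symm
  set HW := H.comap W.subtype.toAddMonoidHom
  have hPH : ∀ x ∈ H, P x ∈ HW := fun x hx => by
    have hx' : V.projection W hVW x + (P x : E) = x :=
      Submodule.projection_add_projection_eq_self hVW x
    have hV : V.projection W hVW x ∈ H :=
      H.largestSubmodule_subset (Submodule.projection_apply_mem _ _)
    change (P x : E) ∈ H
    rw [eq_sub_of_add_eq' hx']
    exact H.sub_mem hx hV
  have : DiscreteTopology HW := discreteTopology_of_largestSubmodule_eq_bot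
    (hH.preimage continuous_subtype_val) (largestSubmodule_comap_subtype_eq_bot hVW.disjoint)
  have : DiscreteTopology HW.toIntSubmodule := inferInstanceAs (DiscreteTopology HW)
  have : IsZLattice ℝ HW.toIntSubmodule := ⟨by
    rw [eq_top_iff, ← LinearMap.range_eq_top.2 (Submodule.projectionOnto_surjective hVW.symm),
      LinearMap.range_eq_map, ← hspan, ← Submodule.span_image]
    exact Submodule.span_mono (Set.image_subset_iff.2 hPH)⟩
  have : Nontrivial W := by
    refine Submodule.nontrivial_iff_ne_bot.2 fun hW => hne (eq_top_iff.2 fun x _ => ?_)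
    have hV : V = ⊤ := by simpa [hW] using hVW.sup_eq_top
    exact H.largestSubmodule_subset (hV ▸ Submodule.mem_top)
  obtain ⟨F, hF0, hFL⟩ := IsZLattice.exists_dual_ne_zero_intValued HW.toIntSubmodule
  refine ⟨F ∘ₗ P, fun h => hF0 ?_, fun x hx => hFL _ (hPH x hx)⟩
  exact (LinearMap.cancel_right (Submodule.projectionOnto_surjective hVW.symm)).1
    (h.trans (LinearMap.zero_comp _).symm)

end Normed

end AddSubgroup

def integerPoints (ι : Type*) : AddSubgroup (ι → ℝ) where
  carrier := {x | ∀ i, ∃ z : ℤ, x i = z}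
  add_mem' {x y} hx hy i := by
    obtain ⟨a, ha⟩ := hx i
    obtain ⟨b, hb⟩ := hy i
    exact ⟨a + b, by simp [ha, hb]⟩
  zero_mem' _ := ⟨0, by simp⟩
  neg_mem' {x} hx i := by
    obtain ⟨a, ha⟩ := hx i
    exact ⟨-a, by simp [ha]⟩

section IntegerPoints

variable {ι : Type*} [Fintype ι]

-- Simultaneous Dirichlet approximation: by compactness of the unit cube, two of the fractional
-- parts `fract (k • u)` are close.
theorem exists_succ_nsmul_dist_integerPoints_lt (u : ι → ℝ) {ε : ℝ} (hε : 0 < ε) :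
    ∃ a : ℕ, ∃ z ∈ integerPoints ι, dist ((a + 1) • u) z < ε := by
  set p : ℕ → ι → ℝ := fun k i => Int.fract ((k • u) i)
  have hp : ∀ k, k • u - p k ∈ integerPoints ι := fun k i =>
    ⟨⌊(k • u) i⌋, Int.self_sub_fract _⟩
  have hcube : ∀ k, p k ∈ Set.univ.pi fun _ => Set.Icc (0 : ℝ) 1 := fun k i _ =>
    ⟨Int.fract_nonneg _, (Int.fract_lt_one _).le⟩
  obtain ⟨q, -, φ, hφ, hlim⟩ := (isCompact_univ_pi fun _ => isCompact_Icc).tendsto_subseq hcube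
  obtain ⟨N, hN⟩ := Metric.cauchySeq_iff.1 hlim.cauchySeq ε hε
  obtain ⟨a, ha⟩ := Nat.exists_eq_add_of_lt (hφ (Nat.lt_succ_self N))
  refine ⟨a, (φ (N + 1) • u - p (φ (N + 1))) - (φ N • u - p (φ N)), sub_mem (hp _) (hp _), ?_⟩
  calc dist ((a + 1) • u) ((φ (N + 1) • u - p (φ (N + 1))) - (φ N • u - p (φ N)))
      = dist (p (φ (N + 1))) (p (φ N)) := by
        rw [dist_eq_norm, dist_eq_norm, ha, add_assoc, add_nsmul u (φ N)]
        congr 1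
        abel
    _ < ε := hN _ N.le_succ _ le_rfl

theorem neg_mem_closure_add_integerPoints (C : PointedCone ℝ (ι → ℝ)) {c : ι → ℝ} (hc : c ∈ C) :
    -c ∈ closure ((C : Set (ι → ℝ)) + (integerPoints ι : Set (ι → ℝ))) := by
  refine Metric.mem_closure_iff.2 fun ε hε => ?_
  obtain ⟨a, z, hz, hdist⟩ := exists_succ_nsmul_dist_integerPoints_lt c hε
  refine ⟨a • c + -z, Set.add_mem_add (nsmul_mem hc a) (neg_mem hz), ?_⟩
  calc dist (-c) (a • c + -z) = dist ((a + 1) • c) z := by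
        rw [dist_eq_norm, dist_eq_norm, ← norm_neg, add_nsmul, one_nsmul]
        congr 1
        abel
    _ < ε := hdist

theorem eq_top_of_integerPoints_le {H : AddSubgroup (ι → ℝ)} (hH : IsClosed (H : Set (ι → ℝ)))
    (hZ : integerPoints ι ≤ H) (C : PointedCone ℝ (ι → ℝ)) (hCH : (C : Set (ι → ℝ)) ⊆ H)
    (hC : ∀ d : ι → ℤ, (∀ u ∈ C, ∑ i, (d i : ℝ) * u i = 0) → d = 0) : H = ⊤ := by
  classical
  by_contra hne
  have hstd : ∀ i, (fun j => if i = j then (1 : ℝ) else 0) ∈ integerPoints ι := fun i j =>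
    ⟨if i = j then 1 else 0, by simp⟩
  have hspan : Submodule.span ℝ (H : Set (ι → ℝ)) = ⊤ := by
    refine Submodule.eq_top_iff'.2 fun x => ?_
    rw [pi_eq_sum_univ x]
    exact Submodule.sum_mem _ fun i _ =>
      Submodule.smul_mem _ _ (Submodule.subset_span (hZ (hstd i)))
  obtain ⟨F, hF0, hFH⟩ := H.exists_dual_ne_zero_intValued_of_isClosed hH hspan hne
  choose d hd using fun i => hFH _ (hZ (hstd i))
  have hFd : ∀ u, F u = ∑ i, (d i : ℝ) * u i := fun u => by
    rw [F.pi_apply_eq_sum_univ]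
    simp [hd, mul_comm]
  have hFC : ∀ u ∈ C, F u = 0 := fun u hu => eq_zero_of_forall_nonneg_mul_eq_intCast
    fun t ht => by simpa using hFH _ (hCH (C.smul_mem ht hu))
  have hd0 : d = 0 := hC d fun u hu => hFd u ▸ hFC u hu
  exact hF0 (LinearMap.ext fun u => by simp [hFd, hd0])

theorem dense_pointedCone_add_integerPoints (C : PointedCone ℝ (ι → ℝ))
    (hC : ∀ d : ι → ℤ, (∀ u ∈ C, ∑ i, (d i : ℝ) * u i = 0) → d = 0) :
    Dense ((C : Set (ι → ℝ)) + (integerPoints ι : Set (ι → ℝ))) := by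
  set S := (C : Set (ι → ℝ)) + (integerPoints ι : Set (ι → ℝ))
  set M := (C.toAddSubmonoid ⊔ (integerPoints ι).toAddSubmonoid).topologicalClosure
  have hM : ∀ x, x ∈ M ↔ x ∈ closure S := fun x => by
    rw [← SetLike.mem_coe, AddSubmonoid.coe_topologicalClosure, AddSubmonoid.coe_sup]
    rfl
  have hneg : Set.MapsTo Neg.neg S (closure S) := by
    rintro _ ⟨c, hc, z, hz, rfl⟩
    rw [neg_add, ← hM]
    refine M.add_mem ((hM _).2 (neg_mem_closure_add_integerPoints C hc)) ((hM _).2 ?_)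
    exact subset_closure ⟨0, C.zero_mem, -z, neg_mem hz, zero_add _⟩
  let H : AddSubgroup (ι → ℝ) :=
    { M with
      neg_mem' := fun {x} hx => (hM _).2 <| by
        simpa using hneg.closure continuous_neg ((hM x).1 hx) }
  have hH : H = ⊤ := by
    refine eq_top_of_integerPoints_le (AddSubmonoid.isClosed_topologicalClosure _)
      (fun z hz => (hM z).2 ?_) C (fun c hc => (hM c).2 ?_) hC
    · exact subset_closure ⟨0, C.zero_mem, z, hz, zero_add z⟩
    · exact subset_closure ⟨c, hc, 0, zero_mem _, add_zero c⟩
  exact fun x => (hM x).1 (show x ∈ H from hH ▸ AddSubgroup.mem_top x)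

end IntegerPoints

open Finset in
theorem stmt_4 (n : ℕ) (X C : Set (Fin n → ℝ))
    (hXne : X.Nonempty) (hXopen : IsOpen X)
    (hCcone : ∀ u ∈ C, ∀ t : ℝ, 0 ≤ t → t • u ∈ C)
    (hCadd : ∀ u ∈ C, ∀ v ∈ C, u + v ∈ C)
    (hXC : ∀ x ∈ X, ∀ u ∈ C, x + u ∈ X)
    (hortho : ∀ d : Fin n → ℤ, (∀ u ∈ C, ∑ i, (d i : ℝ) * u i = 0) → d = 0) :
    ∃ x ∈ X, ∀ i, ∃ z : ℤ, x i = (z : ℝ) := by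
  obtain ⟨x₀, hx₀⟩ := hXne
  rcases C.eq_empty_or_nonempty with rfl | ⟨c₀, hc₀⟩
  · exact ⟨x₀, hx₀, fun i => absurd (congrFun (hortho 1 (by simp)) i) one_ne_zero⟩
  let K : PointedCone ℝ (Fin n → ℝ) :=
    { carrier := C
      add_mem' := fun hu hv => hCadd _ hu _ hv
      zero_mem' := by simpa using hCcone c₀ hc₀ 0 le_rfl
      smul_mem' := fun t u hu => hCcone u hu t t.2 }
  obtain ⟨ε, hε, hball⟩ := Metric.isOpen_iff.1 hXopen x₀ hx₀
  obtain ⟨_, ⟨c, hc, z, hz, rfl⟩, hdist⟩ :=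
    (dense_pointedCone_add_integerPoints K hortho).exists_dist_lt (-x₀) hε
  have hX : -(c + z) ∈ X := hball <| by
    rwa [Metric.mem_ball, ← dist_neg_neg, neg_neg, dist_comm]
  exact ⟨-z, by simpa using hXC _ hX c hc, neg_mem hz⟩
end

section
/- Let b₁, …, b_ℓ ∈ ℝⁿ, a₁, …, a_ℓ ∈ ℝ, M an m×n integer matrix, c ∈ ℤᵐ. Let X̂ = {x ∈ ℝⁿ : bᵢᵀx + aᵢ ≤ 0 for all i, and Mx ≤ c} and let C = {x ∈ ℝⁿ : bᵢᵀx ≤ 0 for all i, and Mx ≤ 0}. If d ∈ ℤⁿ is orthogonal to C (i.e., dᵀu = 0 for all u ∈ C), then the set {dᵀu : u ∈ X̂} is bounded. -/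
/-!
By Farkas' lemma, a vector `d` with `d ⬝ᵥ u ≤ 0` on the recession cone `{u | A *ᵥ u ≤ 0}` of the
polyhedron `{x | A *ᵥ x ≤ r}` is a nonnegative combination `y ᵥ* A` of the rows of `A`, so
`d ⬝ᵥ x = y ⬝ᵥ (A *ᵥ x) ≤ y ⬝ᵥ r` on the polyhedron; applying this to `d` and `-d` bounds
`|d ⬝ᵥ x|`. Farkas' lemma follows from the separation theorem for closed cones, once the cone
generated by finitely many vectors is known to be closed: by the conic Carathéodory theorem it is a
finite union of cones generated by linearly independent vectors, each the image of an orthant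
under a closed embedding.
-/

open Function Set Matrix

section Caratheodory

variable {ι : Type*} [Fintype ι]

lemma exists_nonneg_sub_smul_of_pos {y G : ι → ℝ} (hy : 0 ≤ y) {i₀ : ι} (hi₀ : 0 < G i₀) :
    ∃ t : ℝ, 0 ≤ y - t • G ∧ ∃ j, G j ≠ 0 ∧ (y - t • G) j = 0 := by
  classical
  -- `t` is the least ratio `y i / G i` over the entries with `G i > 0`.
  obtain ⟨j, hj, hmin⟩ := Finset.exists_min_image {i | 0 < G i} (fun i => y i / G i)
    ⟨i₀, by simpa using hi₀⟩
  simp only [Finset.mem_filter, Finset.mem_univ, true_and] at hj hmin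
  refine ⟨y j / G j, fun i => ?_, j, hj.ne', by simp [hj.ne']⟩
  simp only [Pi.zero_apply, Pi.sub_apply, Pi.smul_apply, smul_eq_mul, sub_nonneg]
  rcases le_or_gt (G i) 0 with hGi | hGi
  · exact (mul_nonpos_of_nonneg_of_nonpos (div_nonneg (hy j) hj.le) hGi).trans (hy i)
  · simpa [div_mul_cancel₀ _ hGi.ne'] using mul_le_mul_of_nonneg_right (hmin i hGi) hGi.le

lemma exists_nonneg_sub_smul_of_ne_zero {y G : ι → ℝ} (hy : 0 ≤ y) (hG : G ≠ 0) :
    ∃ t : ℝ, 0 ≤ y - t • G ∧ ∃ j, G j ≠ 0 ∧ (y - t • G) j = 0 := by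
  obtain ⟨i₀, hi₀⟩ := ne_iff.mp hG
  rcases (hi₀ : G i₀ ≠ 0).lt_or_gt with hneg | hpos
  · obtain ⟨t, ht, j, hj, htj⟩ := exists_nonneg_sub_smul_of_pos (G := -G) hy (neg_pos.mpr hneg)
    exact ⟨-t, by simpa using ht, j, by simpa using hj, by simpa using htj⟩
  · exact exists_nonneg_sub_smul_of_pos hy hpos

variable {E : Type*} [AddCommGroup E] [Module ℝ E]

lemma exists_sum_smul_eq_zero_of_not_linearIndepOn {v : ι → E} {s : Set ι}
    (h : ¬LinearIndepOn ℝ v s) :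
    ∃ G : ι → ℝ, support G ⊆ s ∧ ∑ i, G i • v i = 0 ∧ G ≠ 0 := by
  obtain ⟨l, hls, hl, hl0⟩ : ∃ l ∈ Finsupp.supported ℝ ℝ s,
      Finsupp.linearCombination ℝ v l = 0 ∧ l ≠ 0 := by
    simpa [linearIndepOn_iff] using h
  refine ⟨l, by simpa [Finsupp.fun_support_eq] using (Finsupp.mem_supported ℝ l).mp hls, ?_,
    by simpa using hl0⟩
  rwa [Finsupp.linearCombination_apply, Finsupp.sum_fintype _ _ (by simp)] at hl

lemma exists_nonneg_linearIndepOn_support (v : ι → E) (y : ι → ℝ) (hy : 0 ≤ y) :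
    ∃ z : ι → ℝ, 0 ≤ z ∧ LinearIndepOn ℝ v (support z) ∧ ∑ i, z i • v i = ∑ i, y i • v i := by
  induction hn : (support y).ncard using Nat.strong_induction_on generalizing y with
  | _ n ih =>
  by_cases hind : LinearIndepOn ℝ v (support y)
  · exact ⟨y, hy, hind, rfl⟩
  obtain ⟨G, hGy, hGv, hG⟩ := exists_sum_smul_eq_zero_of_not_linearIndepOn hind
  obtain ⟨t, hz, j, hGj, hzj⟩ := exists_nonneg_sub_smul_of_ne_zero hy hG
  have hsupp : support (y - t • G) ⊂ support y := by
    refine ssubset_of_subset_not_subset ?_ fun h => h (hGy hGj) hzj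
    exact (support_sub _ _).trans
      (union_subset subset_rfl ((support_const_smul_subset t G).trans hGy))
  obtain ⟨z, hz0, hzind, hzv⟩ := ih _ (hn ▸ ncard_lt_ncard hsupp) _ hz rfl
  refine ⟨z, hz0, hzind, hzv.trans ?_⟩
  simp [sub_smul, mul_smul, Finset.sum_sub_distrib, ← Finset.smul_sum, hGv]

end Caratheodory

section FarkasLemma

variable {ι E : Type*} [AddCommGroup E] [Module ℝ E]

lemma PointedCone.mem_hull_range_iff [Fintype ι] {v : ι → E} {x : E} :
    x ∈ PointedCone.hull ℝ (range v) ↔ ∃ y : ι → ℝ, 0 ≤ y ∧ ∑ i, y i • v i = x := by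
  rw [PointedCone.hull, Submodule.mem_span_range_iff_exists_fun]
  constructor
  · rintro ⟨c, rfl⟩
    exact ⟨fun i => c i, fun i => (c i).2, by simp⟩
  · rintro ⟨y, hy, rfl⟩
    exact ⟨fun i => ⟨y i, hy i⟩, by simp⟩

lemma PointedCone.mem_hull_image_of_support_subset [Fintype ι] {v : ι → E} {s : Set ι}
    {y : ι → ℝ} (hy : 0 ≤ y) (hys : support y ⊆ s) :
    ∑ i, y i • v i ∈ PointedCone.hull ℝ (v '' s) := by
  refine Submodule.sum_mem _ fun i _ => ?_
  by_cases hi : y i = 0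
  · simp [hi]
  · exact Submodule.smul_mem _ (⟨y i, hy i⟩ : NNReal)
      (PointedCone.subset_hull (mem_image_of_mem v (hys hi)))

variable [TopologicalSpace E] [IsTopologicalAddGroup E] [ContinuousSMul ℝ E] [T2Space E]

lemma LinearIndependent.isClosed_hull_range [Finite ι] {v : ι → E} (hv : LinearIndependent ℝ v) :
    IsClosed (PointedCone.hull ℝ (range v) : Set E) := by
  have := Fintype.ofFinite ι
  have hemb := LinearMap.isClosedEmbedding_of_injective (f := Fintype.linearCombination ℝ v)
    (LinearMap.ker_eq_bot.mpr (linearIndependent_iff_injective_fintypeLinearCombination.mp hv))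
  convert hemb.isClosedMap _ (isClosed_Ici (a := (0 : ι → ℝ))) using 1
  ext x
  simp [PointedCone.mem_hull_range_iff, Fintype.linearCombination_apply]

lemma PointedCone.isClosed_hull_range [Finite ι] (v : ι → E) :
    IsClosed (PointedCone.hull ℝ (range v) : Set E) := by
  have := Fintype.ofFinite ι
  have hunion : (PointedCone.hull ℝ (range v) : Set E) =
      ⋃ s ∈ {s : Set ι | LinearIndepOn ℝ v s}, PointedCone.hull ℝ (v '' s) := by
    refine subset_antisymm (fun x hx => ?_) (iUnion₂_subset fun s _ => ?_)
    · obtain ⟨y, hy, rfl⟩ := PointedCone.mem_hull_range_iff.mp hx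
      obtain ⟨z, hz, hzind, hzy⟩ := exists_nonneg_linearIndepOn_support v y hy
      exact mem_biUnion hzind (hzy ▸ PointedCone.mem_hull_image_of_support_subset hz subset_rfl)
    · exact Submodule.span_mono (image_subset_range v s)
  rw [hunion]
  refine (toFinite _).isClosed_biUnion fun s hs => ?_
  rw [image_eq_range]
  exact LinearIndependent.isClosed_hull_range hs

variable [LocallyConvexSpace ℝ E]

theorem PointedCone.mem_hull_range_of_forall_dual [Finite ι] (v : ι → E) {d : E}
    (hd : ∀ f : StrongDual ℝ E, (∀ i, 0 ≤ f (v i)) → 0 ≤ f d) :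
    d ∈ PointedCone.hull ℝ (range v) := by
  by_contra hdC
  obtain ⟨f, hf, hfd⟩ := ProperCone.hyperplane_separation_point
    ⟨PointedCone.hull ℝ (range v), PointedCone.isClosed_hull_range v⟩ hdC
  exact hfd.not_ge (hd f fun i => hf _ (PointedCone.subset_hull (mem_range_self i)))

end FarkasLemma

section Polyhedra

variable {m n : Type*} [Fintype m] [Fintype n]

theorem Matrix.exists_nonneg_vecMul_eq_of_forall_mulVec_nonpos {A : Matrix m n ℝ} {d : n → ℝ}
    (hd : ∀ u, A *ᵥ u ≤ 0 → d ⬝ᵥ u ≤ 0) : ∃ y : m → ℝ, 0 ≤ y ∧ y ᵥ* A = d := by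
  classical
  suffices d ∈ PointedCone.hull ℝ (range A) by
    simpa [vecMul_eq_sum] using PointedCone.mem_hull_range_iff.mp this
  refine PointedCone.mem_hull_range_of_forall_dual A fun f hf => ?_
  have hf_apply (w : n → ℝ) : f w = w ⬝ᵥ fun j => f (Pi.single j 1) := by
    conv_lhs => rw [pi_eq_sum_univ' w]
    simp [dotProduct]
  have hu : A *ᵥ -(fun j => f (Pi.single j 1)) ≤ 0 := fun i => by
    simpa [mulVec, ← hf_apply] using hf i
  simpa [← hf_apply] using hd _ hu

theorem Matrix.bddAbove_dotProduct_of_forall_mulVec_nonpos {A : Matrix m n ℝ} {d : n → ℝ}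
    (hd : ∀ u, A *ᵥ u ≤ 0 → d ⬝ᵥ u ≤ 0) (r : m → ℝ) :
    BddAbove ((d ⬝ᵥ ·) '' {x | A *ᵥ x ≤ r}) := by
  obtain ⟨y, hy, rfl⟩ := exists_nonneg_vecMul_eq_of_forall_mulVec_nonpos hd
  refine ⟨y ⬝ᵥ r, forall_mem_image.mpr fun x hx => ?_⟩
  rw [← dotProduct_mulVec]
  exact dotProduct_le_dotProduct_of_nonneg_left hx hy

theorem Matrix.exists_abs_dotProduct_le_of_forall_mulVec_nonpos {A : Matrix m n ℝ} {d : n → ℝ}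
    (hd : ∀ u, A *ᵥ u ≤ 0 → d ⬝ᵥ u = 0) (r : m → ℝ) :
    ∃ K, ∀ x, A *ᵥ x ≤ r → |d ⬝ᵥ x| ≤ K := by
  obtain ⟨K₁, hK₁⟩ := bddAbove_dotProduct_of_forall_mulVec_nonpos (fun u hu => (hd u hu).le) r
  obtain ⟨K₂, hK₂⟩ := bddAbove_dotProduct_of_forall_mulVec_nonpos (d := -d)
    (fun u hu => by simp [hd u hu]) r
  refine ⟨max K₁ K₂, fun x hx => abs_le.mpr ⟨?_, ?_⟩⟩
  · have := hK₂ (mem_image_of_mem _ hx)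
    simp only [neg_dotProduct] at this
    linarith [le_max_right K₁ K₂]
  · exact (hK₁ (mem_image_of_mem _ hx)).trans (le_max_left K₁ K₂)

end Polyhedra

open Finset in
theorem stmt_5 (n ℓ m : ℕ) (b : Fin ℓ → Fin n → ℝ) (a : Fin ℓ → ℝ)
    (M : Matrix (Fin m) (Fin n) ℤ) (c : Fin m → ℤ)
    (Xhat C : Set (Fin n → ℝ))
    (hXhat : Xhat = {x | (∀ i, (∑ j, b i j * x j) + a i ≤ 0) ∧
                        (∀ i, ∑ j, (M i j : ℝ) * x j ≤ (c i : ℝ))})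
    (hC : C = {x | (∀ i, ∑ j, b i j * x j ≤ 0) ∧ (∀ i, ∑ j, (M i j : ℝ) * x j ≤ 0)})
    (d : Fin n → ℤ) (hortho : ∀ u ∈ C, ∑ i, (d i : ℝ) * u i = 0) :
    ∃ K : ℝ, ∀ u ∈ Xhat, |∑ i, (d i : ℝ) * u i| ≤ K := by
  set A : Matrix (Fin ℓ ⊕ Fin m) (Fin n) ℝ := fromRows (of b) (M.map (↑))
  have hA (x : Fin n → ℝ) (r₁ : Fin ℓ → ℝ) (r₂ : Fin m → ℝ) :
      A *ᵥ x ≤ Sum.elim r₁ r₂ ↔ (∀ i, ∑ j, b i j * x j ≤ r₁ i) ∧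
        ∀ i, ∑ j, (M i j : ℝ) * x j ≤ r₂ i := by
    simp [A, fromRows_mulVec, Pi.le_def, mulVec, dotProduct]
  obtain ⟨K, hK⟩ := exists_abs_dotProduct_le_of_forall_mulVec_nonpos (A := A) (d := (d ·))
    (fun u hu => hortho u (hC ▸ by simpa [← Sum.elim_zero_zero, hA] using hu))
    (Sum.elim (-a) (c ·))
  refine ⟨K, fun u hu => hK u ?_⟩
  rw [hA]
  simpa [hXhat, ← le_neg_iff_add_nonpos_right] using hu
end

section
/- Let k, ℓ, n ∈ ℕ with k, ℓ ≥ 1, and let p ∈ ℚ_{>0}^k, r ∈ ℚ_{>0}, q_{i,j} ∈ ℚ_{>0} (1 ≤ i ≤ k, 1 ≤ j ≤ n), s_j ∈ ℚ_{>0} (1 ≤ j ≤ n). Suppose q_{i,j} ≤ s_j for all i, j. Then there exist x₁,…,x_n ∈ ℕ with ∑ᵢ pᵢ ∏ⱼ q_{i,j}^{xⱼ} > r·∏ⱼ s_j^{xⱼ} if and only if ∑ᵢ pᵢ > r. -/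
open Finset in
theorem stmt_11 (k n : ℕ) (hk : 1 ≤ k) (p : Fin k → ℚ) (q : Fin k → Fin n → ℚ)
    (r : ℚ) (s : Fin n → ℚ)
    (hp : ∀ i, 0 < p i) (hq : ∀ i j, 0 < q i j) (hr : 0 < r) (hs : ∀ j, 0 < s j)
    (hdom : ∀ i j, q i j ≤ s j) :
    (∃ x : Fin n → ℕ,
      (r : ℝ) * ∏ j, (s j : ℝ) ^ (x j) < ∑ i, (p i : ℝ) * ∏ j, (q i j : ℝ) ^ (x j)) ↔
    (r : ℝ) < ∑ i, (p i : ℝ) := by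
  constructor
  · rintro ⟨x, hx⟩
    have hPpos : 0 < ∏ j, (s j : ℝ) ^ (x j) := by
      apply Finset.prod_pos
      intro j _
      exact pow_pos (by exact_mod_cast hs j) _
    have hle : ∑ i, (p i : ℝ) * ∏ j, (q i j : ℝ) ^ (x j)
        ≤ (∑ i, (p i : ℝ)) * ∏ j, (s j : ℝ) ^ (x j) := by
      rw [Finset.sum_mul]
      apply Finset.sum_le_sum
      intro i _
      apply mul_le_mul_of_nonneg_left _ (by exact_mod_cast (hp i).le)
      apply Finset.prod_le_prod
      · intro j _; exact pow_nonneg (by exact_mod_cast (hq i j).le) _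
      · intro j _
        exact pow_le_pow_left₀ (by exact_mod_cast (hq i j).le)
          (by exact_mod_cast hdom i j) _
    have := lt_of_lt_of_le hx hle
    exact lt_of_mul_lt_mul_right (by linarith) hPpos.le
  · intro h
    refine ⟨fun _ => 0, ?_⟩
    simpa using h
end

section
/- Let u = (−log 2, log 2) and v = (log 3, −log 3) in ℝ², and let C = {(x, −x) : x ∈ ℝ}. Then the set D = {x·u + y·v : x, y ∈ ℕ} is a dense subset of the line C. -/
/-!
The additive monoid generated by `log 3 > 0` and `-log 2 < 0` is dense in `ℝ`. Since
`log 3 / log 2` is irrational (`3 ^ q ≠ 2 ^ p`), Dirichlet's approximation theorem gives arbitrarily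
small nonzero elements `k log 3 - j log 2` with `j, k ∈ ℕ`; stepping down with a multiple of an
element of the opposite sign and back up with multiples of such a small element reaches every real
number up to that small error. The map `t ↦ (t, -t)` carries `ℝ` onto `C` and this monoid onto `D`.
-/

open Real Set
open scoped Pointwise

namespace AddSubmonoid

theorem exists_mem_Ioc_of_pos_of_neg (M : AddSubmonoid ℝ) {s x : ℝ} (hs : s ∈ M) (hs0 : 0 < s)
    (hx : x ∈ M) (hx0 : x < 0) (t : ℝ) : ∃ m ∈ M, m ∈ Ioc (t - s) t := by
  obtain ⟨k, hk⟩ := exists_nat_ge (t / x)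
  have hkx : k * x ≤ t := (div_le_iff_of_neg hx0).1 hk
  have hr : 0 ≤ (t - k * x) / s := div_nonneg (by linarith) hs0.le
  set n := ⌊(t - k * x) / s⌋₊
  have hn_le : n * s ≤ t - k * x := (le_div_iff₀ hs0).1 (Nat.floor_le hr)
  have hn_lt : t - k * x < (n + 1) * s := (div_lt_iff₀ hs0).1 (Nat.lt_floor_add_one _)
  refine ⟨k • x + n • s, add_mem (nsmul_mem hx k) (nsmul_mem hs n), ?_, ?_⟩ <;>
    simp only [nsmul_eq_mul] <;> linarith

theorem dense_of_exists_ne_zero_abs_lt (M : AddSubmonoid ℝ) (hpos : ∃ x ∈ M, 0 < x)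
    (hneg : ∃ x ∈ M, x < 0) (hsmall : ∀ ε > 0, ∃ s ∈ M, s ≠ 0 ∧ |s| < ε) :
    Dense (M : Set ℝ) := by
  rw [Metric.dense_iff]
  intro t ε hε
  obtain ⟨s, hs, hs0, hsε⟩ := hsmall ε hε
  rcases hs0.lt_or_gt with hs0 | hs0
  · obtain ⟨x, hx, hx0⟩ := hpos
    obtain ⟨m, hm, hmt⟩ := (-M).exists_mem_Ioc_of_pos_of_neg (s := -s) (x := -x)
      (by simpa using hs) (by linarith) (by simpa using hx) (by linarith) (-t)
    refine ⟨-m, ?_, mem_neg.1 hm⟩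
    rw [abs_of_neg hs0] at hsε
    rw [Metric.mem_ball, Real.dist_eq, abs_lt]
    constructor <;> linarith [hmt.1, hmt.2]
  · obtain ⟨x, hx, hx0⟩ := hneg
    obtain ⟨m, hm, hmt⟩ := M.exists_mem_Ioc_of_pos_of_neg hs hs0 hx hx0 t
    refine ⟨m, ?_, hm⟩
    rw [abs_of_pos hs0] at hsε
    rw [Metric.mem_ball, Real.dist_eq, abs_lt]
    constructor <;> linarith [hmt.1, hmt.2]

end AddSubmonoid

theorem exists_mem_addSubmonoidClosure_pair_neg_ne_zero_abs_lt {a b : ℝ} (ha : 0 < a)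
    (hb : 0 < b) (h : Irrational (a / b)) {ε : ℝ} (hε : 0 < ε) :
    ∃ s ∈ AddSubmonoid.closure {a, -b}, s ≠ 0 ∧ |s| < ε := by
  obtain ⟨N, hN⟩ := exists_nat_gt (b / ε)
  have hN0 : 0 < N := by exact_mod_cast (div_pos hb hε).trans hN
  obtain ⟨j, k, hk, -, hjk⟩ := Real.exists_int_int_abs_mul_sub_le (a / b) hN0
  have hN' : (0 : ℝ) < N := by exact_mod_cast hN0
  -- `k * (a / b) > 0` lies within `1 / (N + 1) < 1` of `j`
  have hj : 0 ≤ j := by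
    have : (1 : ℝ) / (N + 1) < 1 := by rw [div_lt_one (by positivity)]; linarith
    have : (0 : ℝ) < k * (a / b) := by positivity
    have : ((-1 : ℤ) : ℝ) < j := by push_cast; linarith [(abs_le.1 hjk).2]
    have : (-1 : ℤ) < j := by exact_mod_cast this
    omega
  lift j to ℕ using hj
  lift k to ℕ using hk.le
  push_cast at hjk hk
  have hs : k • a + j • -b = b * (k * (a / b) - j) := by
    rw [nsmul_eq_mul, nsmul_eq_mul]; field_simp; ring
  refine ⟨k • a + j • -b, (AddSubmonoid.mem_closure_pair _ _ _).2 ⟨k, j, rfl⟩, ?_, ?_⟩ <;> rw [hs]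
  · exact mul_ne_zero hb.ne' (sub_ne_zero.2 ((h.natCast_mul (by omega)).ne_nat j))
  · have hbN : b < ε * N := (div_lt_iff₀' hε).1 hN
    calc |b * (k * (a / b) - j)| ≤ b * (1 / (N + 1)) := by
          rw [abs_mul, abs_of_pos hb]; gcongr
      _ < ε := by rw [mul_one_div, div_lt_iff₀ (by positivity)]; nlinarith

theorem dense_addSubmonoidClosure_pair_neg {a b : ℝ} (ha : 0 < a) (hb : 0 < b)
    (h : Irrational (a / b)) : Dense (AddSubmonoid.closure {a, -b} : Set ℝ) :=
  AddSubmonoid.dense_of_exists_ne_zero_abs_lt _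
    ⟨a, AddSubmonoid.subset_closure (by simp), ha⟩
    ⟨-b, AddSubmonoid.subset_closure (by simp), neg_neg_of_pos hb⟩
    fun _ hε ↦ exists_mem_addSubmonoidClosure_pair_neg_ne_zero_abs_lt ha hb h hε

theorem irrational_log_three_div_log_two : Irrational (log 3 / log 2) := by
  rintro ⟨q, hq⟩
  have hlog2 : 0 < log 2 := log_pos (by norm_num)
  have hlog3 : 0 < log 3 := log_pos (by norm_num)
  have hq0 : 0 < q := by exact_mod_cast (hq ▸ div_pos hlog3 hlog2 : (0 : ℝ) < q)
  obtain ⟨m, hm⟩ := Int.eq_ofNat_of_zero_le (Rat.num_pos.2 hq0).le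
  have hlog : log ((3 : ℝ) ^ q.den) = log ((2 : ℝ) ^ m) := by
    rw [Rat.cast_def, hm, div_eq_div_iff (by positivity) hlog2.ne'] at hq
    rw [log_pow, log_pow]
    push_cast at hq
    linarith
  have hpow : 3 ^ q.den = 2 ^ m := by
    exact_mod_cast log_injOn_pos (by simp) (by simp) hlog
  have h32 : 3 ∣ 2 ^ m := hpow ▸ dvd_pow_self 3 q.den_ne_zero
  exact absurd (Nat.prime_three.dvd_of_dvd_pow h32) (by norm_num)

theorem stmt_13 (u v : ℝ × ℝ) (hu : u = (-Real.log 2, Real.log 2))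
    (hv : v = (Real.log 3, -Real.log 3))
    (C : Set (ℝ × ℝ)) (hC : C = {p | ∃ x : ℝ, p = (x, -x)})
    (D : Set (ℝ × ℝ))
    (hD : D = {p | ∃ x y : ℕ, p = (x : ℝ) • u + (y : ℝ) • v}) :
    D ⊆ C ∧ C ⊆ closure D := by
  subst hu hv hC hD
  constructor
  · rintro _ ⟨x, y, rfl⟩
    exact ⟨y * log 3 - x * log 2, by ext <;> simp <;> ring⟩
  · rintro _ ⟨t, rfl⟩
    have hM := dense_addSubmonoidClosure_pair_neg (log_pos (by norm_num : (1 : ℝ) < 3))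
      (log_pos (by norm_num : (1 : ℝ) < 2)) irrational_log_three_div_log_two
    have hf : Continuous fun t : ℝ ↦ (t, -t) := by fun_prop
    refine closure_mono ?_
      (image_closure_subset_closure_image hf ⟨t, hM.closure_eq ▸ mem_univ t, rfl⟩)
    rintro _ ⟨s, hs, rfl⟩
    obtain ⟨m, n, rfl⟩ := (AddSubmonoid.mem_closure_pair _ _ _).1 hs
    exact ⟨n, m, by ext <;> simp; ring⟩
end

section
/- Every run ρ in a finite directed labeled graph (automaton) admits a simple cycle decomposition: there exist a run γ with the same first and last state, of length less than |Q(ρ)|², visiting exactly the states Q(ρ), and a multiset of simple cycles, each using only states from Q(ρ), such that ρ can be obtained from γ by repeatedly injecting these simple cycles. -/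
/-! Induct on the length of `ρ`. Once it exceeds `|Q(ρ)|²`, take the shortest prefix of `ρ`
with a repeated vertex, `a ++ x :: ω ++ [x]`. If every vertex of `ω` also occurs outside
`x :: ω`, this simple cycle can be cut out. Otherwise the suffix `x :: r` misses a vertex of `ρ`,
while the duplicate-free prefix `a ++ x :: ω` has at most `|Q(ρ)|` entries; since
`|Q|² - |Q| ≥ (|Q| - 1)²`, the suffix is again long for its own vertex set and a removable cycle
is found inside it. Cutting out cycles until the run is short yields `γ`, and `ρ` is recovered
by injecting them back. -/

variable {V : Type*} [DecidableEq V]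

/-- A run (walk) in the directed graph `E`, represented as its list of visited
vertices: nonempty and consecutive vertices are joined by an edge. -/
def IsRun (E : V → V → Prop) (ρ : List V) : Prop :=
  ρ ≠ [] ∧ ρ.Chain' E

/-- A simple cycle: a run of positive length whose first and last vertices
coincide and in which every vertex occurs at most twice. -/
def IsSimpleCycle (E : V → V → Prop) (c : List V) : Prop :=
  IsRun E c ∧ 2 ≤ c.length ∧ c.head? = c.getLast? ∧ ∀ v : V, c.count v ≤ 2

/-- `ObtainedBy E γ cs ρ` : the run `ρ` is obtained from the run `γ` by
injecting, in some order, the cycles of the multiset `cs` (each cycle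
`q :: ω ++ [q]` is injected at an occurrence of its first state `q`). -/
inductive ObtainedBy (E : V → V → Prop) : List V → Multiset (List V) → List V → Prop where
  | refl (γ : List V) : ObtainedBy E γ 0 γ
  | step (γ : List V) (cs : Multiset (List V)) (l r ω : List V) (q : V) :
      ObtainedBy E γ cs (l ++ q :: r) →
      ObtainedBy E γ ((q :: ω ++ [q]) ::ₘ cs) (l ++ q :: ω ++ q :: r)


theorem List.exists_eq_append_cons_append_cons_of_not_nodup {α : Type*} (l : List α)
    (hl : ¬ l.Nodup) : ∃ a x ω r, l = a ++ x :: ω ++ x :: r ∧ (a ++ x :: ω).Nodup := by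
  induction l using List.reverseRecOn with
  | nil => exact absurd List.nodup_nil hl
  | append_singleton init y ih =>
    by_cases hinit : init.Nodup
    · have hy : y ∈ init := by
        by_contra hy
        exact hl (by simpa using (List.nodup_concat init y).2 ⟨hy, hinit⟩)
      obtain ⟨a, ω, rfl⟩ := List.append_of_mem hy
      exact ⟨a, y, ω, [], by simp, hinit⟩
    · obtain ⟨a, x, ω, r, rfl, hnd⟩ := ih hinit
      exact ⟨a, x, ω, r ++ [y], by simp, hnd⟩

def HasRemovableCycle {α : Type*} (ρ : List α) : Prop :=
  ∃ l q ω r, ρ = l ++ q :: ω ++ q :: r ∧ (q :: ω).Nodup ∧ ω ⊆ l ++ q :: r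

theorem HasRemovableCycle.append_left {α : Type*} {ρ : List α} (hρ : HasRemovableCycle ρ)
    (p : List α) : HasRemovableCycle (p ++ ρ) := by
  obtain ⟨l, q, ω, r, rfl, hnd, hsub⟩ := hρ
  exact ⟨p ++ l, q, ω, r, by simp, hnd, fun v hv => by simpa using Or.inr (hsub hv)⟩

theorem List.toFinset_append_cons_eq_of_subset {l ω r : List V} {q : V}
    (h : ω ⊆ l ++ q :: r) :
    (l ++ q :: r).toFinset = (l ++ q :: ω ++ q :: r).toFinset := by
  ext v
  have := @h v
  simp only [List.mem_toFinset, List.mem_append, List.mem_cons] at this ⊢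
  tauto

theorem hasRemovableCycle_of_card_sq_lt (ρ : List V) (hρ : ρ.toFinset.card ^ 2 < ρ.length) :
    HasRemovableCycle ρ := by
  induction hn : ρ.length using Nat.strong_induction_on generalizing ρ with
  | _ n ih =>
  have hnd : ¬ ρ.Nodup := fun hnd => by
    rw [List.toFinset_card_of_nodup hnd] at hρ
    nlinarith
  obtain ⟨a, x, ω, r, rfl, hfirst⟩ := ρ.exists_eq_append_cons_append_cons_of_not_nodup hnd
  by_cases hsub : ω ⊆ a ++ x :: r
  · exact ⟨a, x, ω, r, rfl, hfirst.sublist (List.sublist_append_right a _), hsub⟩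
  obtain ⟨v, hvω, hv⟩ : ∃ v ∈ ω, v ∉ a ++ x :: r := by
    simpa [List.subset_def] using hsub
  have hcard : (x :: r).toFinset.card < (a ++ x :: ω ++ x :: r).toFinset.card := by
    refine Finset.card_lt_card ((Finset.ssubset_iff_of_subset ?_).2 ⟨v, ?_, ?_⟩)
    · exact Multiset.toFinset_subset.2 (List.subset_append_right _ _)
    · simp [hvω]
    · exact fun h => hv (List.mem_append_right a (List.mem_toFinset.1 h))
  have hprefix : (a ++ x :: ω).length ≤ (a ++ x :: ω ++ x :: r).toFinset.card := by
    rw [← List.toFinset_card_of_nodup hfirst]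
    exact Finset.card_le_card (Multiset.toFinset_subset.2 (List.subset_append_left _ _))
  rw [List.length_append] at hρ hn
  have hsuffix := ih _ (by simp at hn ⊢; omega) (x :: r) (by nlinarith) rfl
  simpa using hsuffix.append_left (a ++ x :: ω)

theorem IsRun.skip_cycle {α : Type*} {E : α → α → Prop} {l ω r : List α} {q : α}
    (h : IsRun E (l ++ q :: ω ++ q :: r)) : IsRun E (l ++ q :: r) := by
  have hchain : List.IsChain E (l ++ [q] ++ r) :=
    List.IsChain.append_overlap (h.2.infix ⟨[], ω ++ q :: r, by simp⟩)
      (h.2.infix ⟨l ++ q :: ω, [], by simp⟩) (List.cons_ne_nil q [])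
  rw [List.append_assoc, List.singleton_append] at hchain
  exact ⟨by simp, hchain⟩

theorem IsRun.isSimpleCycle_of_nodup {E : V → V → Prop} {l ω r : List V} {q : V}
    (h : IsRun E (l ++ q :: ω ++ q :: r)) (hnd : (q :: ω).Nodup) :
    IsSimpleCycle E (q :: ω ++ [q]) := by
  refine ⟨⟨by simp, h.2.infix ⟨l, r, by simp⟩⟩, by simp,
    by rw [List.getLast?_concat]; rfl, fun v => ?_⟩
  rw [List.count_append]
  have := List.nodup_iff_count_le_one.1 hnd v
  have := List.count_le_length (a := v) (l := [q])
  simp_all only [List.length_singleton]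
  omega

theorem stmt_17 (E : V → V → Prop) (ρ : List V) (hρ : IsRun E ρ) :
    ∃ (γ : List V) (cs : Multiset (List V)),
      IsRun E γ ∧
      γ.head? = ρ.head? ∧ γ.getLast? = ρ.getLast? ∧
      γ.length - 1 < ρ.toFinset.card ^ 2 ∧
      γ.toFinset = ρ.toFinset ∧
      (∀ c ∈ cs, IsSimpleCycle E c ∧ c.toFinset ⊆ ρ.toFinset) ∧
      ObtainedBy E γ cs ρ := by
  induction hn : ρ.length using Nat.strong_induction_on generalizing ρ with
  | _ n ih =>
  by_cases hshort : ρ.length - 1 < ρ.toFinset.card ^ 2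
  · exact ⟨ρ, 0, hρ, rfl, rfl, hshort, rfl, by simp, .refl ρ⟩
  have hpos := List.length_pos_iff.2 hρ.1
  obtain ⟨l, q, ω, r, rfl, hnd, hsub⟩ := hasRemovableCycle_of_card_sq_lt ρ (by omega)
  have hQ := List.toFinset_append_cons_eq_of_subset hsub
  obtain ⟨γ, cs, hγ, hhead, hlast, hlen, hγQ, hcs, hobt⟩ :=
    ih _ (by simp at hn ⊢; omega) (l ++ q :: r) hρ.skip_cycle rfl
  refine ⟨γ, (q :: ω ++ [q]) ::ₘ cs, hγ, ?_, ?_, hQ ▸ hlen, hγQ.trans hQ, ?_,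
    .step γ cs l r ω q hobt⟩
  · rw [hhead]
    cases l <;> simp
  · rw [hlast, List.getLast?_append_cons, List.getLast?_append_cons]
  refine Multiset.forall_mem_cons.2 ⟨⟨hρ.isSimpleCycle_of_nodup hnd, ?_⟩, fun c hc => ?_⟩
  · exact Multiset.toFinset_subset.2 (List.IsInfix.subset ⟨l, r, by simp⟩)
  · exact ⟨(hcs c hc).1, hQ ▸ (hcs c hc).2⟩
end

section
/- If a walk in a directed graph on vertex set Q has length at least |Q|², then it contains |Q| pairwise non-overlapping simple cycles, and at least one of these cycles can be removed from the walk without decreasing the set of vertices visited by the walk. -/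
/-- The subwalk of `w` occupying positions `i` through `j` (inclusive). -/
def cycleSegment {V : Type*} (w : List V) (i j : ℕ) : List V :=
  (w.drop i).take (j - i + 1)

/-- The positions `i < j` delimit a simple cycle of the walk `w` (as a list of
visited vertices): the vertices at positions `i` and `j` coincide and every
vertex occurs at most twice in the subwalk from `i` to `j`. -/
def IsSimpleCycleAt {V : Type*} [DecidableEq V] (w : List V) (i j : ℕ) : Prop :=
  i < j ∧ j < w.length ∧
  w[i]? = w[j]? ∧
  ∀ v : V, (cycleSegment w i j).count v ≤ 2

/-!
Cut the first `|Q|²` steps of the walk into `|Q|` consecutive windows of `|Q|` steps. Each window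
visits `|Q| + 1` positions, so some vertex repeats in it, and a first repetition is a simple cycle;
this gives `|Q|` non-overlapping simple cycles. Let `Wᵢ` be the set of vertices occurring only
strictly inside the `i`-th cycle. The `Wᵢ` are pairwise disjoint and miss the first vertex of any
cycle, so they cannot all be nonempty; cutting out a cycle with `Wᵢ = ∅` loses no vertex.
-/

namespace IsSimpleCycleAt

variable {V : Type*} [DecidableEq V] {w : List V} {i j : ℕ}

lemma of_take {m : ℕ} (h : IsSimpleCycleAt (w.take m) i j) : IsSimpleCycleAt w i j := by
  obtain ⟨hij, hj, heq, hcount⟩ := h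
  have hjm : j < m := by simp at hj; omega
  refine ⟨hij, by simp at hj; omega, ?_, fun v => ?_⟩
  · rwa [List.getElem?_take_of_lt (by omega), List.getElem?_take_of_lt hjm] at heq
  · have hseg : cycleSegment (w.take m) i j = cycleSegment w i j := by
      simp only [cycleSegment, List.drop_take, List.take_take]
      congr 1
      omega
    exact hseg ▸ hcount v

lemma of_drop {s : ℕ} (h : IsSimpleCycleAt (w.drop s) i j) :
    IsSimpleCycleAt w (s + i) (s + j) := by
  obtain ⟨hij, hj, heq, hcount⟩ := h
  refine ⟨by omega, by simp at hj; omega, by simpa only [List.getElem?_drop] using heq,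
    fun v => ?_⟩
  have hseg : cycleSegment (w.drop s) i j = cycleSegment w (s + i) (s + j) := by
    simp only [cycleSegment, List.drop_drop]
    congr 2; omega
  exact hseg ▸ hcount v

end IsSimpleCycleAt

/-- The last position whose vertex recurs later starts a simple cycle, since everything after
it is repetition-free. -/
lemma exists_isSimpleCycleAt_of_not_nodup {V : Type*} [DecidableEq V] {w : List V}
    (hw : ¬ w.Nodup) : ∃ i j, IsSimpleCycleAt w i j := by
  induction w with
  | nil => exact absurd List.nodup_nil hw
  | cons x t ih =>
    by_cases ht : t.Nodup
    · have hx : x ∈ t := by simpa [ht] using hw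
      obtain ⟨k, hk, rfl⟩ := List.getElem_of_mem hx
      refine ⟨0, k + 1, by omega, by simpa using hk, by simp, fun v => ?_⟩
      have hsub : (cycleSegment (t[k] :: t) 0 (k + 1)).Sublist (t[k] :: t) :=
        (List.take_prefix _ _).sublist
      have ht1 := List.nodup_iff_count_le_one.mp ht v
      have := hsub.count_le v
      simp only [List.count_cons] at this
      split_ifs at this <;> omega
    · obtain ⟨i, j, hij⟩ := ih ht
      exact ⟨1 + i, 1 + j, IsSimpleCycleAt.of_drop (w := x :: t) (s := 1) hij⟩

lemma exists_isSimpleCycleAt_in_window {V : Type*} [Fintype V] [DecidableEq V] (w : List V)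
    (s : ℕ) (hs : s + Fintype.card V < w.length) :
    ∃ i j, s ≤ i ∧ j ≤ s + Fintype.card V ∧ IsSimpleCycleAt w i j := by
  have hwin : ¬ ((w.drop s).take (Fintype.card V + 1)).Nodup := fun hnd => by
    have := hnd.length_le_card
    simp at this
    omega
  obtain ⟨i, j, hij⟩ := exists_isSimpleCycleAt_of_not_nodup hwin
  have hj : j ≤ Fintype.card V := by have := hij.2.1; simp at this; omega
  exact ⟨s + i, s + j, by omega, by omega, hij.of_take.of_drop⟩

lemma Finset.exists_eq_empty_of_pairwise_disjoint {ι α : Type*} [Fintype ι] [Fintype α]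
    [DecidableEq α] (s : ι → Finset α) (hdisj : Pairwise (Function.onFun Disjoint s)) (a : α)
    (ha : ∀ t, a ∉ s t) (hcard : Fintype.card α ≤ Fintype.card ι) : ∃ t, s t = ∅ := by
  by_contra! hne
  have hle : Fintype.card ι ≤ (Finset.univ.biUnion s).card :=
    Finset.card_le_card_biUnion (fun t _ t' _ htt' => hdisj htt') (fun t _ => hne t)
  have hsub : Finset.univ.biUnion s ⊆ Finset.univ.erase a := fun v hv => by
    obtain ⟨t, -, hvt⟩ := Finset.mem_biUnion.mp hv
    exact Finset.mem_erase.mpr ⟨fun hva => ha t (hva ▸ hvt), Finset.mem_univ v⟩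
  have := Finset.card_le_card hsub
  rw [Finset.card_erase_of_mem (Finset.mem_univ a), Finset.card_univ] at this
  have : 0 < Fintype.card α := Fintype.card_pos_iff.mpr ⟨a⟩
  omega

section innerVertices

variable {V : Type*} [DecidableEq V]

open Classical in
/-- The vertices of `w` all of whose occurrences lie strictly between positions `i` and `j`
(the set `Wᵢ` of the proof idea). -/
noncomputable def innerVertices (w : List V) (i j : ℕ) : Finset V :=
  w.toFinset.filter fun v => ∀ p, w[p]? = some v → i < p ∧ p < j

lemma mem_innerVertices {w : List V} {i j : ℕ} {v : V} :
    v ∈ innerVertices w i j ↔ v ∈ w ∧ ∀ p, w[p]? = some v → i < p ∧ p < j := by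
  simp [innerVertices]

lemma notMem_innerVertices {w : List V} {i j p : ℕ} {v : V} (hp : w[p]? = some v)
    (hout : p ≤ i ∨ j ≤ p) : v ∉ innerVertices w i j := fun hv => by
  have := (mem_innerVertices.mp hv).2 p hp
  omega

lemma disjoint_innerVertices (w : List V) {i j i' j' : ℕ} (h : j ≤ i') :
    Disjoint (innerVertices w i j) (innerVertices w i' j') := by
  refine Finset.disjoint_left.mpr fun v hv hv' => ?_
  obtain ⟨hvw, hin⟩ := mem_innerVertices.mp hv
  obtain ⟨p, hp⟩ := List.mem_iff_getElem?.mp hvw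
  have := hin p hp
  exact notMem_innerVertices hp (by omega) hv'

lemma toFinset_take_append_drop {w : List V} {i j : ℕ} (heq : w[i]? = w[j]?)
    (hinner : innerVertices w i j = ∅) : (w.take i ++ w.drop j).toFinset = w.toFinset := by
  ext v
  simp only [List.mem_toFinset, List.mem_append]
  refine ⟨fun h => h.elim (List.take_subset _ _ ·) (List.drop_subset _ _ ·), fun hv => ?_⟩
  have hnot : v ∉ innerVertices w i j := hinner ▸ Finset.notMem_empty v
  simp only [mem_innerVertices, hv, true_and, not_forall] at hnot
  obtain ⟨p, hp, hout⟩ := hnot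
  rcases lt_trichotomy p i with hlt | rfl | hgt
  · exact Or.inl (List.mem_of_getElem? ((List.getElem?_take_of_lt hlt).trans hp))
  · refine Or.inr (List.mem_of_getElem? (i := 0) ?_)
    rw [List.getElem?_drop, Nat.add_zero, ← heq, hp]
  · refine Or.inr (List.mem_of_getElem? (i := p - j) ?_)
    rwa [List.getElem?_drop, Nat.add_sub_cancel' (by omega)]

end innerVertices

lemma exists_nonoverlapping_simpleCycles {V : Type*} [Fintype V] [DecidableEq V] (w : List V)
    (hlen : Fintype.card V ^ 2 < w.length) :
    ∃ pos : Fin (Fintype.card V) → ℕ × ℕ,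
      (∀ t, IsSimpleCycleAt w (pos t).1 (pos t).2) ∧
      (∀ t t', t < t' → (pos t).2 ≤ (pos t').1) := by
  set n := Fintype.card V
  have hwindow : ∀ t : Fin n, ∃ p : ℕ × ℕ,
      t * n ≤ p.1 ∧ p.2 ≤ t * n + n ∧ IsSimpleCycleAt w p.1 p.2 := fun t => by
    have : (t + 1) * n ≤ n * n := Nat.mul_le_mul_right n t.isLt
    obtain ⟨i, j, hi, hj, hc⟩ := exists_isSimpleCycleAt_in_window w (t * n) (by nlinarith)
    exact ⟨(i, j), hi, hj, hc⟩
  choose pos hstart hend hcyc using hwindow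
  refine ⟨pos, hcyc, fun t t' htt' => ?_⟩
  calc (pos t).2 ≤ t * n + n := hend t
    _ = (t + 1) * n := by ring
    _ ≤ t' * n := Nat.mul_le_mul_right n htt'
    _ ≤ (pos t').1 := hstart t'

lemma exists_removable_simpleCycle {V ι : Type*} [Fintype V] [DecidableEq V] [Fintype ι]
    [LinearOrder ι] [Nonempty ι] (w : List V) (pos : ι → ℕ × ℕ)
    (hcyc : ∀ t, IsSimpleCycleAt w (pos t).1 (pos t).2)
    (hdisj : ∀ t t', t < t' → (pos t).2 ≤ (pos t').1)
    (hcard : Fintype.card V ≤ Fintype.card ι) :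
    ∃ t, (w.take (pos t).1 ++ w.drop (pos t).2).toFinset = w.toFinset := by
  obtain ⟨t₀⟩ := ‹Nonempty ι›
  obtain ⟨hij₀, hj₀, -, -⟩ := hcyc t₀
  have hv₀ : w[(pos t₀).1]? = some w[(pos t₀).1] := List.getElem?_eq_getElem (by omega)
  have hpairwise :
      Pairwise (Function.onFun Disjoint fun t => innerVertices w (pos t).1 (pos t).2) := by
    intro t t' hne
    rcases hne.lt_or_gt with h | h
    · exact disjoint_innerVertices w (hdisj t t' h)
    · exact (disjoint_innerVertices w (hdisj t' t h)).symm
  have hout : ∀ t, w[(pos t₀).1] ∉ innerVertices w (pos t).1 (pos t).2 := fun t => by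
    refine notMem_innerVertices hv₀ ?_
    rcases lt_trichotomy t t₀ with h | rfl | h
    · exact Or.inr (hdisj t t₀ h)
    · exact Or.inl le_rfl
    · exact Or.inl ((Nat.le_of_lt hij₀).trans (hdisj t₀ t h))
  obtain ⟨t, ht⟩ := Finset.exists_eq_empty_of_pairwise_disjoint _ hpairwise _ hout hcard
  exact ⟨t, toFinset_take_append_drop (hcyc t).2.2.1 ht⟩

theorem stmt_18_general {V : Type*} [Fintype V] [DecidableEq V]
    (w : List V) (hw : w ≠ [])
    (hlen : (Fintype.card V) ^ 2 ≤ w.length - 1) :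
    ∃ pos : Fin (Fintype.card V) → ℕ × ℕ,
      (∀ t, IsSimpleCycleAt w (pos t).1 (pos t).2) ∧
      (∀ t t', t < t' → (pos t).2 ≤ (pos t').1) ∧
      ∃ t, (w.take (pos t).1 ++ w.drop (pos t).2).toFinset = w.toFinset := by
  have hpos : 0 < w.length := List.length_pos_iff.mpr hw
  obtain ⟨pos, hcyc, hdisj⟩ := exists_nonoverlapping_simpleCycles w (by omega)
  have : Nonempty (Fin (Fintype.card V)) :=
    Fin.pos_iff_nonempty.mp (Fintype.card_pos_iff.mpr ⟨w[0]'hpos⟩)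
  exact ⟨pos, hcyc, hdisj, exists_removable_simpleCycle w pos hcyc hdisj (by simp)⟩

theorem stmt_18 {V : Type*} [Fintype V] [DecidableEq V] (E : V → V → Prop)
    (w : List V) (hw : w ≠ []) (hchain : w.Chain' E)
    (hlen : (Fintype.card V) ^ 2 ≤ w.length - 1) :
    ∃ pos : Fin (Fintype.card V) → ℕ × ℕ,
      (∀ t, IsSimpleCycleAt w (pos t).1 (pos t).2) ∧
      (∀ t t', t < t' → (pos t).2 ≤ (pos t').1) ∧
      ∃ t, (w.take (pos t).1 ++ w.drop (pos t).2).toFinset = w.toFinset :=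
  stmt_18_general w hw hlen
end
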